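/- arXiv:1212.2024 — 5 statements merged into one kernel-verified Lean document; each statement's English description precedes it below -/
import Mathlib

section
/- For every computably enumerable language L ⊆ A* over a finite alphabet A, there exist a finitely generated decidable minimal presentation P = ⟨X ∥ R⟩, a constant C ≥ 1, and a computable injective map μ : A* → F(X) with |μ(u)| ≤ C·(|u| + 1) for every u ∈ A*, such that: (1) for every u ∈ A*, the word μ(u) is trivial in P if and only if u ∈ L; and (2) the word problem for P is solvable if and only if L is decidable. -/
/-- The length of the reduced word representing an element of the free group. -/
noncomputable def wordLength {X : Type*} (w : FreeGroup X) : ℕ :=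
  letI := Classical.decEq X
  (FreeGroup.toWord w).length

/-- The area of a word `w` with respect to a relator set `R`: the least `N` such that
`w` is the product of `N` conjugates of elements of `R ∪ R⁻¹`. -/
noncomputable def Area {X : Type*} (R : Set (FreeGroup X)) (w : FreeGroup X) : ℕ :=
  sInf {N : ℕ | ∃ l : List (FreeGroup X), l.length = N ∧
    (∀ x ∈ l, ∃ r, (r ∈ R ∨ r⁻¹ ∈ R) ∧ ∃ g, x = g * r * g⁻¹) ∧ l.prod = w}

/-- The Dehn function of the presentation `⟨X ∥ R⟩`. -/
noncomputable def DehnFunction {X : Type*} (R : Set (FreeGroup X)) (n : ℕ) : ℕ :=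
  sSup {a : ℕ | ∃ w ∈ Subgroup.normalClosure R, wordLength w ≤ n ∧ Area R w = a}

/-- The presentation `⟨X ∥ R⟩` is decidable: membership in the relator set is decidable
(words in the free group being encoded as words in the letters). -/
def DecidableRelators {X : Type*} [Primcodable X] (R : Set (FreeGroup X)) : Prop :=
  ComputablePred fun l : List (X × Bool) => FreeGroup.mk l ∈ R

/-- The word problem for `⟨X ∥ R⟩` is solvable: the set of trivial words is decidable. -/
def WordProblemSolvable {X : Type*} [Primcodable X] (R : Set (FreeGroup X)) : Prop :=
  ComputablePred fun l : List (X × Bool) => FreeGroup.mk l ∈ Subgroup.normalClosure R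

/-- The bounded word problem for `⟨X ∥ R⟩` is solvable: the set of pairs `(w, n)` with `w`
trivial of area at most `n` is decidable. -/
def BoundedWordProblemSolvable {X : Type*} [Primcodable X] (R : Set (FreeGroup X)) : Prop :=
  ComputablePred fun p : List (X × Bool) × ℕ =>
    FreeGroup.mk p.1 ∈ Subgroup.normalClosure R ∧ Area R (FreeGroup.mk p.1) ≤ p.2

/-- A presentation `⟨X ∥ R⟩` is minimal if no proper subset of `R` has the same
normal closure as `R`. -/
def MinimalPresentation {X : Type*} (R : Set (FreeGroup X)) : Prop :=
  ∀ R' ⊆ R, Subgroup.normalClosure R' = Subgroup.normalClosure R → R' = R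

/-- A predicate is computably enumerable (semi-decidable). -/
def CEPred {α : Type*} [Primcodable α] (p : α → Prop) : Prop :=
  Partrec fun a => Part.assert (p a) fun _ => Part.some ()

/-!
Write `u` also for the positive word spelling `u ∈ A*`, and add to `A` a marker letter `c` and a
stable letter `s`. If `L` is decidable, take `R = {s}` and let `μ(u)` be `u s u⁻¹` or `u c u⁻¹`
according as `u ∈ L` or not. Otherwise put `μ(u) = ⁅u c u⁻¹, s⁆` and take as relators the words
`s^k μ(v) s^-k` for `v ∈ L`, where `k` is the first stage at which a fixed enumeration of `L`
accepts `v`. Modulo these relators, `s` is the stable letter of the HNN extension of `F(A ∪ {c})`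
along the identity of `H = ⟨v c v⁻¹ | v ∈ L⟩`, so by Britton's lemma `μ(u)` is trivial iff
`u c u⁻¹ ∈ H`, and a ping-pong action of `F(A ∪ {c})` shows that this happens iff `u ∈ L`.
The padding bounds `k` by the length of a relator, which makes `R` decidable, and running the
same argument for `L \ {v}` shows that no relator is redundant. In both cases a solution of the
word problem decides `L` through `μ`.
-/

open scoped commutatorElement

namespace FreeGroup

variable {α : Type*}

theorem IsReduced.append_of_disjoint {l₁ l₂ : List (α × Bool)} (h₁ : IsReduced l₁)
    (h₂ : IsReduced l₂) (hdisj : ∀ a ∈ l₁, ∀ b ∈ l₂, a.1 ≠ b.1) :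
    IsReduced (l₁ ++ l₂) :=
  List.isChain_append.2 ⟨h₁, h₂, fun a ha b hb hab =>
    absurd hab (hdisj a (List.mem_of_mem_getLast? ha) b (List.mem_of_mem_head? hb))⟩

theorem isReduced_map_true {β : Type*} (f : β → α) (l : List β) :
    IsReduced (l.map fun b => (f b, true)) :=
  (List.isChain_map _).2 (List.isChain_iff_getElem.2 fun _ _ _ => rfl)

theorem isReduced_replicate (n : ℕ) (a : α × Bool) : IsReduced (List.replicate n a) :=
  List.isChain_replicate_of_rel n fun _ => rfl

theorem IsReduced.invRev {l : List (α × Bool)} (h : IsReduced l) : IsReduced (invRev l) := by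
  unfold FreeGroup.invRev IsReduced
  rw [List.isChain_reverse, List.isChain_map]
  exact h.imp fun a b hab heq => by simpa using (hab heq.symm).symm

theorem IsReduced.conj {l : List (α × Bool)} {x : α} (h : IsReduced l)
    (hx : ∀ a ∈ l.getLast?, a.1 ≠ x) (b : Bool) :
    IsReduced (l ++ (x, b) :: FreeGroup.invRev l) := by
  have hsnoc : ∀ c, IsReduced (l ++ [(x, c)]) := fun c =>
    List.isChain_append.2 ⟨h, .singleton _, fun a ha y hy hay =>
      absurd (hay.trans (by simp [(Option.mem_some_iff.1 hy).symm])) (hx a ha)⟩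
  have hcons : IsReduced ([(x, b)] ++ FreeGroup.invRev l) := by
    simpa [invRev_append, FreeGroup.invRev] using (hsnoc (!b)).invRev
  simpa using hsnoc b |>.append_overlap hcons (List.cons_ne_nil _ _)

theorem IsReduced.mk_injective {l l' : List (α × Bool)} (h : IsReduced l) (h' : IsReduced l')
    (he : mk l = mk l') : l = l' := by
  classical
  rw [← h.reduce_eq, ← h'.reduce_eq, ← toWord_mk, ← toWord_mk, he]

theorem IsReduced.mk_eq_iff [DecidableEq α] {l l' : List (α × Bool)} (h' : IsReduced l') :
    mk l = mk l' ↔ reduce l = l' := by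
  rw [← toWord_inj, toWord_mk, toWord_mk, h'.reduce_eq]

def conjWord (l : List (α × Bool)) (x : α) : List (α × Bool) := l ++ (x, true) :: invRev l

theorem mk_conjWord (l : List (α × Bool)) (x : α) :
    mk (conjWord l x) = mk l * of x * (mk l)⁻¹ := by
  rw [conjWord, inv_mk, of, mul_mk, mul_mk, List.append_assoc, List.singleton_append]

theorem length_conjWord (l : List (α × Bool)) (x : α) :
    (conjWord l x).length = 2 * l.length + 1 := by
  simp [conjWord]
  ring

theorem conjWord_inj_left {l l' : List (α × Bool)} {x x' : α}
    (h : conjWord l x = conjWord l' x') : l = l' := by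
  have hlen := congrArg List.length h
  rw [length_conjWord, length_conjWord] at hlen
  exact (List.append_inj h (by omega)).1

/-- `F(Y)` acts on two copies of itself: the letters other than `c` by left multiplication, and
`c` by exchanging the copies away from `S⁻¹`. Then every `k c k⁻¹` with `k ∈ S` fixes the
identity of the first copy, while `g c g⁻¹` moves it when `g ∉ S`. -/
theorem mem_of_conj_mem_closure_conj {Y : Type*} {c : Y} {S : Set (FreeGroup Y)}
    (hS : S ⊆ Subgroup.closure (of '' {y | y ≠ c})) {g : FreeGroup Y}
    (hg : g ∈ Subgroup.closure (of '' {y | y ≠ c}))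
    (h : g * of c * g⁻¹ ∈ Subgroup.closure ((fun k => k * of c * k⁻¹) '' S)) : g ∈ S := by
  classical
  let flip : Equiv.Perm (FreeGroup Y ⊕ FreeGroup Y) := Function.Involutive.toPerm
    (fun ω => if (Sum.elim id id ω)⁻¹ ∈ S then ω else ω.swap) fun ω => by
      rcases ω with x | x <;> by_cases hx : x⁻¹ ∈ S <;> simp [hx]
  have hflip : ∀ k, flip (Sum.inl k⁻¹) = if k ∈ S then Sum.inl k⁻¹ else Sum.inr k⁻¹ := by
    intro k
    show (if _ then _ else _) = _
    simp
  let act : FreeGroup Y →* Equiv.Perm (FreeGroup Y ⊕ FreeGroup Y) :=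
    lift fun y => if y = c then flip else MulAction.toPermHom _ _ (of y)
  have hact : Subgroup.closure (of '' {y | y ≠ c}) ≤
      MonoidHom.eqLocus act (MulAction.toPermHom _ _) := by
    rw [Subgroup.closure_le]
    rintro _ ⟨y, hy, rfl⟩
    exact (lift_apply_of (f := _)).trans (if_neg hy)
  have hconj : ∀ k ∈ Subgroup.closure (of '' {y | y ≠ c}),
      act (k * of c * k⁻¹) (Sum.inl 1) = k • flip (Sum.inl k⁻¹) := by
    intro k hk
    have hk' : act k = MulAction.toPermHom _ _ k := hact hk
    have hc : act (of c) = flip := (lift_apply_of (f := _)).trans (if_pos rfl)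
    simp [hk', hc]
  have hfix : Subgroup.closure ((fun k => k * of c * k⁻¹) '' S) ≤
      (MulAction.stabilizer _ (Sum.inl 1 : FreeGroup Y ⊕ FreeGroup Y)).comap act := by
    rw [Subgroup.closure_le]
    rintro _ ⟨k, hk, rfl⟩
    show act (k * of c * k⁻¹) (Sum.inl 1) = Sum.inl 1
    rw [hconj k (hS hk)]
    simp [hflip, hk]
  by_contra hgS
  have : act (g * of c * g⁻¹) (Sum.inl 1) = Sum.inl 1 := hfix h
  rw [hconj g hg] at this
  simp [hflip, hgS] at this

end FreeGroup

theorem HNNExtension.mem_of_commute_t {G : Type*} [Group G] {A B : Subgroup G} {φ : A ≃* B}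
    {g : G} (h : Commute (t : HNNExtension G A B φ) (of g)) : g ∈ A := by
  by_contra hg
  let w : NormalWord.ReducedWord G A B :=
    ⟨1, [(1, g), (-1, g⁻¹)], List.isChain_pair.2 fun hmem => absurd (by simpa using hmem) hg⟩
  have hw : w.prod φ = 1 := by
    simp [w, NormalWord.ReducedWord.prod, ← mul_assoc, h.eq]
  have := ReducedWord.toList_eq_nil_of_mem_of_range φ w (hw ▸ one_mem _)
  simp [w] at this

namespace FreeGroup

def commLast {k : ℕ} (y : FreeGroup (Fin k)) : FreeGroup (Fin (k + 1)) :=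
  ⁅map Fin.castSucc y, of (Fin.last k)⁆

/-- Modulo the relators `commLast y` (`y ∈ T`) the group is the HNN extension of `F(Fin k)` along
the identity of `closure T`, with stable letter `Fin.last k`; Britton's lemma applies there. -/
theorem mem_closure_of_commLast_mem_normalClosure {k : ℕ} {T : Set (FreeGroup (Fin k))}
    {x : FreeGroup (Fin k)} (h : commLast x ∈ Subgroup.normalClosure (commLast '' T)) :
    x ∈ Subgroup.closure T := by
  let Φ : FreeGroup (Fin (k + 1)) →*
      HNNExtension (FreeGroup (Fin k)) (Subgroup.closure T) (Subgroup.closure T) (.refl _) :=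
    lift (Fin.lastCases HNNExtension.t fun y => HNNExtension.of (of y))
  have hΦ : ∀ y, Φ (commLast y) = ⁅HNNExtension.of (A := Subgroup.closure T)
      (B := Subgroup.closure T) (φ := .refl _) y, HNNExtension.t⁆ := by
    have hcomp : Φ.comp (map Fin.castSucc) = HNNExtension.of :=
      ext_hom _ _ fun y => by simp [Φ]
    intro y
    rw [commLast, map_commutatorElement, ← MonoidHom.comp_apply, hcomp]
    simp [Φ]
  have hker : Subgroup.normalClosure (commLast '' T) ≤ Φ.ker := by
    refine Subgroup.normalClosure_le_normal ?_
    rintro _ ⟨y, hy, rfl⟩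
    rw [SetLike.mem_coe, MonoidHom.mem_ker, hΦ, commutatorElement_eq_one_iff_commute]
    exact (HNNExtension.t_mul_of (φ := .refl _) ⟨y, Subgroup.subset_closure hy⟩).symm
  have hx := hker h
  rw [MonoidHom.mem_ker, hΦ, commutatorElement_eq_one_iff_commute] at hx
  exact HNNExtension.mem_of_commute_t hx.symm

def liftWord {k : ℕ} (l : List (Fin k × Bool)) : List (Fin (k + 1) × Bool) :=
  l.map fun x => (x.1.castSucc, x.2)

theorem liftWord_injective {k : ℕ} :
    Function.Injective (liftWord : List (Fin k × Bool) → List (Fin (k + 1) × Bool)) :=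
  List.map_injective_iff.2 fun _ _ h => by
    simp only [Prod.mk.injEq, Fin.castSucc_inj] at h
    exact Prod.ext h.1 h.2

theorem mk_liftWord {k : ℕ} (l : List (Fin k × Bool)) :
    mk (liftWord l) = map Fin.castSucc (mk l) :=
  map.mk.symm

theorem invRev_liftWord {k : ℕ} (l : List (Fin k × Bool)) :
    invRev (liftWord l) = liftWord (invRev l) := by
  simp [invRev, liftWord]

theorem liftWord_ne_nil {k : ℕ} {l : List (Fin k × Bool)} (h : l ≠ []) : liftWord l ≠ [] := by
  simpa [liftWord] using h

theorem fst_ne_last_of_mem_liftWord {k : ℕ} {l : List (Fin k × Bool)} {a : Fin (k + 1) × Bool}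
    (ha : a ∈ liftWord l) : a.1 ≠ Fin.last k := by
  obtain ⟨x, -, rfl⟩ := List.mem_map.1 ha
  exact Fin.castSucc_ne_last _

theorem IsReduced.liftWord {k : ℕ} {l : List (Fin k × Bool)} (h : IsReduced l) :
    IsReduced (liftWord l) :=
  (List.isChain_map _).2 (h.imp fun _ _ hab heq => hab (Fin.castSucc_injective _ heq))

def commLastWord {k : ℕ} (l : List (Fin k × Bool)) : List (Fin (k + 1) × Bool) :=
  conjWord (liftWord l) (Fin.last k) ++ [(Fin.last k, false)]

theorem mk_commLastWord {k : ℕ} (l : List (Fin k × Bool)) :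
    mk (commLastWord l) = commLast (mk l) := by
  rw [commLastWord, ← mul_mk, mk_conjWord, mk_liftWord, commLast, commutatorElement_def]
  rfl

def padCommLastWord {k : ℕ} (j : ℕ) (l : List (Fin k × Bool)) : List (Fin (k + 1) × Bool) :=
  List.replicate j (Fin.last k, true) ++ commLastWord l ++ List.replicate j (Fin.last k, false)

theorem mk_padCommLastWord {k : ℕ} (j : ℕ) (l : List (Fin k × Bool)) :
    mk (padCommLastWord j l) =
      of (Fin.last k) ^ j * commLast (mk l) * (of (Fin.last k) ^ j)⁻¹ := by
  classical
  rw [padCommLastWord, ← mul_mk, ← mul_mk, mk_commLastWord, ← toWord_of_pow, mk_toWord,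
    ← mk_toWord (x := (of _ ^ j)⁻¹), toWord_inv, toWord_of_pow]
  simp [invRev]

theorem IsReduced.padCommLastWord {k : ℕ} {l : List (Fin k × Bool)} (h : IsReduced l)
    (hne : l ≠ []) (j : ℕ) : IsReduced (padCommLastWord j l) := by
  set s := Fin.last k
  set X := FreeGroup.liftWord l
  have hX : ∀ a ∈ X, a.1 ≠ s := fun _ => fst_ne_last_of_mem_liftWord
  have hXinv : ∀ a ∈ FreeGroup.invRev X, a.1 ≠ s := by
    rw [invRev_liftWord]
    exact fun _ => fst_ne_last_of_mem_liftWord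
  have hXne : X ≠ [] := liftWord_ne_nil hne
  have hleft : IsReduced (List.replicate j (s, true) ++ X) :=
    (isReduced_replicate _ _).append_of_disjoint h.liftWord fun a ha b hb => by
      rw [List.eq_of_mem_replicate ha]
      exact (hX b hb).symm
  have hmid : IsReduced (X ++ (s, true) :: FreeGroup.invRev X) :=
    h.liftWord.conj (fun a ha => hX a (List.mem_of_mem_getLast? ha)) true
  have hright : IsReduced (FreeGroup.invRev X ++ List.replicate (j + 1) (s, false)) :=
    h.liftWord.invRev.append_of_disjoint (isReduced_replicate _ _) fun a ha b hb => by
      rw [List.eq_of_mem_replicate hb]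
      exact hXinv a ha
  have h₁ : IsReduced (List.replicate j (s, true) ++ X ++ [(s, true)] ++ FreeGroup.invRev X) := by
    simpa using hleft.append_overlap hmid hXne
  simpa [FreeGroup.padCommLastWord, commLastWord, conjWord, List.replicate_succ] using
    h₁.append_overlap hright (by simpa [FreeGroup.invRev] using hXne)

end FreeGroup

section Spelling

open FreeGroup

variable {A : Type} [Fintype A]

/-- The marker `c` is `Fin.last` in `Fin (card A + 1)`, the stable letter `s` is `Fin.last` in
`Fin (card A + 2)`. -/
noncomputable def letter (a : A) : Fin (Fintype.card A + 1) := (Fintype.equivFin A a).castSucc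

theorem letter_injective : Function.Injective (letter (A := A)) :=
  (Fin.castSucc_injective _).comp (Fintype.equivFin A).injective

theorem letter_ne_last (a : A) : letter a ≠ Fin.last _ := Fin.castSucc_ne_last _

noncomputable def spell (u : List A) : List (Fin (Fintype.card A + 1) × Bool) :=
  u.map fun a => (letter a, true)

theorem length_spell (u : List A) : (spell u).length = u.length := List.length_map _

theorem isReduced_spell (u : List A) : IsReduced (spell u) := isReduced_map_true _ _

theorem fst_ne_last_of_mem_spell {u : List A} {x} (hx : x ∈ spell u) : x.1 ≠ Fin.last _ := by
  obtain ⟨a, -, rfl⟩ := List.mem_map.1 hx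
  exact letter_ne_last a

theorem spell_injective : Function.Injective (spell (A := A)) :=
  List.map_injective_iff.2 fun _ _ hab => letter_injective (congrArg Prod.fst hab)

theorem mk_spell_injective : Function.Injective fun u : List A => mk (spell u) := fun u v h =>
  spell_injective ((isReduced_spell u).mk_injective (isReduced_spell v) h)

theorem mk_spell_mem_closure (u : List A) :
    mk (spell u) ∈ Subgroup.closure (of '' {y | y ≠ Fin.last _}) := by
  induction u with
  | nil => exact one_mem _
  | cons a u ih =>
    rw [spell, List.map_cons, ← List.singleton_append, ← mul_mk]
    exact mul_mem (Subgroup.subset_closure ⟨_, letter_ne_last a, rfl⟩) ih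

noncomputable def markedWord (u : List A) : List (Fin (Fintype.card A + 1) × Bool) :=
  conjWord (spell u) (Fin.last _)

theorem isReduced_markedWord (u : List A) : IsReduced (markedWord u) :=
  (isReduced_spell u).conj (fun _ hx => fst_ne_last_of_mem_spell (List.mem_of_mem_getLast? hx)) _

theorem markedWord_ne_nil (u : List A) : markedWord u ≠ [] := by simp [markedWord, conjWord]

noncomputable def simulationWord (u : List A) : List (Fin (Fintype.card A + 2) × Bool) :=
  commLastWord (markedWord u)

theorem length_simulationWord (u : List A) : (simulationWord u).length = 4 * (u.length + 1) := by
  simp [simulationWord, commLastWord, conjWord, liftWord, markedWord, length_spell]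
  ring

theorem mk_simulationWord_mem_normalClosure_iff (V : Set (List A)) (u : List A) :
    mk (simulationWord u) ∈ Subgroup.normalClosure ((fun v => mk (simulationWord v)) '' V) ↔
      u ∈ V := by
  refine ⟨fun h => ?_, fun h => Subgroup.subset_normalClosure ⟨u, h, rfl⟩⟩
  simp only [simulationWord, mk_commLastWord] at h
  rw [← Set.image_image commLast (fun v => mk (markedWord v))] at h
  have hH := mem_closure_of_commLast_mem_normalClosure h
  simp only [markedWord, mk_conjWord] at hH
  rw [← Set.image_image (fun k => k * of (Fin.last _) * k⁻¹) (fun v => mk (spell v))] at hH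
  obtain ⟨v, hv, huv⟩ := mem_of_conj_mem_closure_conj
    (by rintro _ ⟨v, -, rfl⟩; exact mk_spell_mem_closure v) (mk_spell_mem_closure u) hH
  exact mk_spell_injective huv ▸ hv

end Spelling

section Presentations

variable {X : Type*}

theorem IsConj.mem_normal_iff {G : Type*} [Group G] {N : Subgroup G} [hN : N.Normal] {a b : G}
    (h : IsConj a b) : a ∈ N ↔ b ∈ N := by
  obtain ⟨c, rfl⟩ := isConj_iff.1 h
  exact ⟨fun ha => hN.conj_mem a ha c, fun hb => by simpa [mul_assoc] using hN.conj_mem' _ hb c⟩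

theorem normalClosure_le_of_forall_isConj {R Q : Set (FreeGroup X)}
    (h : ∀ r ∈ R, ∃ q ∈ Q, IsConj q r) :
    Subgroup.normalClosure R ≤ Subgroup.normalClosure Q :=
  Subgroup.normalClosure_le_normal fun r hr =>
    Subgroup.conjugatesOfSet_subset_normalClosure (Group.mem_conjugatesOfSet_iff.2 (h r hr))

theorem minimalPresentation_of_forall_notMem {R : Set (FreeGroup X)}
    (h : ∀ r ∈ R, r ∉ Subgroup.normalClosure (R \ {r})) : MinimalPresentation R := by
  intro R' hR' heq
  refine hR'.antisymm fun r hr => by_contra fun hr' => h r hr ?_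
  have : r ∈ Subgroup.normalClosure R' := heq ▸ Subgroup.subset_normalClosure hr
  exact Subgroup.normalClosure_mono (fun r' h' => show r' ∈ R \ {r} from
    ⟨hR' h', fun hrr => hr' (hrr ▸ h')⟩) this

theorem minimalPresentation_singleton_of (x : X) : MinimalPresentation {FreeGroup.of x} :=
  minimalPresentation_of_forall_notMem fun r hr => by
    rw [hr, Set.sdiff_self, Subgroup.normalClosure_empty, Subgroup.mem_bot]
    exact FreeGroup.of_ne_one x

theorem wordLength_mk_le (l : List (X × Bool)) : wordLength (FreeGroup.mk l) ≤ l.length := by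
  unfold wordLength
  exact @FreeGroup.norm_mk_le _ _ (Classical.decEq X)

theorem computablePred_of_wordProblemSolvable [Primcodable X] {α : Type*} [Primcodable α]
    {R : Set (FreeGroup X)} {p : α → Prop} {μ : α → List (X × Bool)} (hμ : Computable μ)
    (hp : ∀ a, FreeGroup.mk (μ a) ∈ Subgroup.normalClosure R ↔ p a)
    (hR : WordProblemSolvable R) : ComputablePred p := by
  obtain ⟨_, hR⟩ := hR
  exact (hR.comp hμ).computablePred.of_eq hp

end Presentations

namespace FreeGroup

section KillLetter

variable {X : Type*} [DecidableEq X]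

def killLetter (x : X) : FreeGroup X →* FreeGroup X := lift fun y => if y = x then 1 else of y

theorem killLetter_mk (x : X) (l : List (X × Bool)) :
    killLetter x (mk l) = mk (l.filter fun a => a.1 ≠ x) := by
  induction l with
  | nil => rfl
  | cons a l ih =>
    rw [← List.singleton_append, ← mul_mk, _root_.map_mul, ih, List.filter_append, ← mul_mk]
    congr 1
    obtain ⟨y, b⟩ := a
    have hmk : mk [(y, b)] = if b then of y else (of y)⁻¹ := by
      cases b
      · rw [of, inv_mk]
        rfl
      · rfl
    by_cases hy : y = x
    · simp [hy, killLetter, ← one_eq_mk]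
    · cases b <;> simp [hmk, hy, killLetter]

theorem normalClosure_singleton_of_eq_ker (x : X) :
    Subgroup.normalClosure {of x} = (killLetter x).ker := by
  refine le_antisymm (Subgroup.normalClosure_le_normal ?_) fun g hg => ?_
  · simp [killLetter]
  · let π := QuotientGroup.mk' (Subgroup.normalClosure {of x})
    have hπ : π.comp (killLetter x) = π := ext_hom _ _ fun y => by
      by_cases hy : y = x
      · subst hy
        rw [MonoidHom.comp_apply, killLetter, lift_apply_of, if_pos rfl, _root_.map_one,
          eq_comm, QuotientGroup.mk'_apply, QuotientGroup.eq_one_iff]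
        exact Subgroup.subset_normalClosure rfl
      · simp [killLetter, hy]
    have := DFunLike.congr_fun hπ g
    rw [MonoidHom.comp_apply, hg, _root_.map_one] at this
    exact (QuotientGroup.eq_one_iff g).1 this.symm

theorem mk_mem_normalClosure_singleton_of_iff (x : X) (l : List (X × Bool)) :
    mk l ∈ Subgroup.normalClosure {of x} ↔ reduce (l.filter fun a => a.1 ≠ x) = [] := by
  rw [normalClosure_singleton_of_eq_ker, MonoidHom.mem_ker, killLetter_mk, ← toWord_eq_nil_iff,
    toWord_mk]

theorem of_mem_normalClosure_singleton_of_iff {x y : X} :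
    of y ∈ Subgroup.normalClosure {of x} ↔ y = x := by
  refine ⟨fun h => by_contra fun hy => ?_, fun h => h ▸ Subgroup.subset_normalClosure rfl⟩
  rw [normalClosure_singleton_of_eq_ker, MonoidHom.mem_ker] at h
  simp [killLetter, hy] at h

end KillLetter

section Computability

variable {α : Type*} [Primcodable α]

theorem primrec_reduce [DecidableEq α] :
    Primrec (reduce : List (α × Bool) → List (α × Bool)) := by
  have hstep : Primrec₂ fun (_ : List (α × Bool))
      (p : (α × Bool) × List (α × Bool) × List (α × Bool)) =>
      (List.casesOn p.2.2 [p.1] fun hd tl =>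
        if p.1.1 = hd.1 ∧ p.1.2 = !hd.2 then tl else p.1 :: hd :: tl : List (α × Bool)) := by
    refine Primrec.list_casesOn
      (f := fun q : List (α × Bool) × (α × Bool) × List (α × Bool) × List (α × Bool) => q.2.2.2)
      (g := fun q => [q.2.1])
      (h := fun q (p : (α × Bool) × List (α × Bool)) =>
        if q.2.1.1 = p.1.1 ∧ q.2.1.2 = !p.1.2 then p.2 else q.2.1 :: p.1 :: p.2)
      (Primrec.snd.comp (Primrec.snd.comp Primrec.snd))
      (Primrec.list_cons.comp (Primrec.fst.comp Primrec.snd) (Primrec.const [])) ?_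
    refine Primrec.ite (PrimrecPred.and ?_ ?_) (Primrec.snd.comp Primrec.snd) ?_
    · exact Primrec.eq.comp (Primrec.fst.comp (Primrec.fst.comp (Primrec.snd.comp Primrec.fst)))
        (Primrec.fst.comp (Primrec.fst.comp Primrec.snd))
    · exact Primrec.eq.comp (Primrec.snd.comp (Primrec.fst.comp (Primrec.snd.comp Primrec.fst)))
        (Primrec.not.comp (Primrec.snd.comp (Primrec.fst.comp Primrec.snd)))
    · exact Primrec.list_cons.comp (Primrec.fst.comp (Primrec.snd.comp Primrec.fst))
        (Primrec.list_cons.comp (Primrec.fst.comp Primrec.snd) (Primrec.snd.comp Primrec.snd))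
  exact (Primrec.list_rec (β := α × Bool) (σ := List (α × Bool)) Primrec.id (Primrec.const [])
    hstep).of_eq fun _ => rfl

theorem primrec_invRev : Primrec (invRev : List (α × Bool) → List (α × Bool)) :=
  Primrec.list_reverse.comp <| Primrec.list_map .id <|
    (Primrec.fst.comp Primrec.snd).pair (Primrec.not.comp (Primrec.snd.comp Primrec.snd))

theorem primrec₂_conjWord : Primrec₂ (conjWord : List (α × Bool) → α → List (α × Bool)) :=
  Primrec.list_append.comp .fst
    (Primrec.list_cons.comp (Primrec.snd.pair (Primrec.const true)) (primrec_invRev.comp .fst))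

theorem _root_.Primrec.list_replicate (a : α) : Primrec fun n : ℕ => List.replicate n a :=
  (Primrec.list_map Primrec.list_range (Primrec.const a).to₂).of_eq fun n => by simp

theorem primrec_liftWord {k : ℕ} :
    Primrec (liftWord : List (Fin k × Bool) → List (Fin (k + 1) × Bool)) :=
  Primrec.list_map .id ((Primrec.dom_finite fun x : Fin k × Bool => (x.1.castSucc, x.2)).comp
    Primrec.snd).to₂

theorem primrec_commLastWord {k : ℕ} :
    Primrec (commLastWord : List (Fin k × Bool) → List (Fin (k + 1) × Bool)) :=
  Primrec.list_append.comp (primrec₂_conjWord.comp primrec_liftWord (Primrec.const _))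
    (Primrec.const _)

theorem primrec₂_padCommLastWord {k : ℕ} :
    Primrec₂ (padCommLastWord : ℕ → List (Fin k × Bool) → List (Fin (k + 1) × Bool)) :=
  Primrec.list_append.comp
    (Primrec.list_append.comp ((Primrec.list_replicate _).comp Primrec.fst)
      (primrec_commLastWord.comp Primrec.snd))
    ((Primrec.list_replicate _).comp Primrec.fst)

variable [DecidableEq α]

theorem decidableRelators_singleton_of (x : α) : DecidableRelators {of x} :=
  (Primrec.eq.comp primrec_reduce (Primrec.const [(x, true)])).computablePred.of_eq fun _ =>
    IsReduced.singleton.mk_eq_iff.symm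

theorem wordProblemSolvable_singleton_of (x : α) : WordProblemSolvable {of x} := by
  have hfilter : Primrec fun l : List (α × Bool) => l.filter fun a => a.1 ≠ x :=
    Primrec.listFilter (Primrec.eq.comp Primrec.fst (Primrec.const x)).not
  exact (Primrec.eq.comp (primrec_reduce.comp hfilter) (Primrec.const [])).computablePred.of_eq
    fun l => (mk_mem_normalClosure_singleton_of_iff x l).symm

end Computability

end FreeGroup

section Simulation

open FreeGroup

variable {A : Type} [Primcodable A]

def IsSimulation (L : Set (List A)) {m : ℕ} (R : Set (FreeGroup (Fin m))) (C : ℕ)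
    (μ : List A → FreeGroup (Fin m)) : Prop :=
  DecidableRelators R ∧ MinimalPresentation R ∧ 1 ≤ C ∧ Function.Injective μ ∧
    (∃ μ' : List A → List (Fin m × Bool), Computable μ' ∧ ∀ u, FreeGroup.mk (μ' u) = μ u) ∧
    (∀ u, wordLength (μ u) ≤ C * (u.length + 1)) ∧
    (∀ u, μ u ∈ Subgroup.normalClosure R ↔ u ∈ L) ∧
    (WordProblemSolvable R ↔ ComputablePred fun u : List A => u ∈ L)

theorem IsSimulation.of_word {L : Set (List A)} {m : ℕ} {R : Set (FreeGroup (Fin m))} {C : ℕ}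
    {μ : List A → List (Fin m × Bool)} (hR : DecidableRelators R) (hmin : MinimalPresentation R)
    (hC : 1 ≤ C) (hinj : Function.Injective fun u => mk (μ u)) (hμ : Computable μ)
    (hlen : ∀ u, (μ u).length ≤ C * (u.length + 1))
    (htriv : ∀ u, mk (μ u) ∈ Subgroup.normalClosure R ↔ u ∈ L)
    (hwp : ComputablePred (· ∈ L) → WordProblemSolvable R) :
    IsSimulation L R C fun u => mk (μ u) :=
  ⟨hR, hmin, hC, hinj, ⟨μ, hμ, fun _ => rfl⟩, fun u => (wordLength_mk_le _).trans (hlen u),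
    htriv, ⟨computablePred_of_wordProblemSolvable hμ htriv, hwp⟩⟩

variable [Fintype A]

theorem primrec_spell : Primrec (spell : List A → List (Fin (Fintype.card A + 1) × Bool)) :=
  Primrec.list_map .id ((Primrec.dom_finite fun a : A => (letter a, true)).comp Primrec.snd).to₂

theorem primrec_simulationWord :
    Primrec (simulationWord : List A → List (Fin (Fintype.card A + 2) × Bool)) :=
  primrec_commLastWord.comp (primrec₂_conjWord.comp primrec_spell (Primrec.const _))

theorem exists_isSimulation_of_computablePred {L : Set (List A)}
    (hL : ComputablePred fun u => u ∈ L) :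
    ∃ (m : ℕ) (R : Set (FreeGroup (Fin m))) (C : ℕ) (μ : List A → FreeGroup (Fin m)),
      IsSimulation L R C μ := by
  obtain ⟨_, hdec⟩ := hL
  let target (u : List A) : Fin (Fintype.card A + 2) :=
    if u ∈ L then Fin.last _ else (Fin.last _).castSucc
  let word (u : List A) := conjWord (liftWord (spell u)) (target u)
  have hreduced : ∀ u, IsReduced (word u) := fun u =>
    (isReduced_spell u).liftWord.conj (fun a ha => by
      obtain ⟨⟨y, b⟩, hy, rfl⟩ := List.mem_map.1 (List.mem_of_mem_getLast? ha)
      have hy := fst_ne_last_of_mem_spell hy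
      by_cases hu : u ∈ L <;> simp [target, hu, Fin.castSucc_ne_last, hy]) true
  have htarget : Computable target :=
    (hdec.cond (Computable.const (Fin.last _)) (Computable.const (Fin.last _).castSucc)).of_eq
      fun u => by by_cases hu : u ∈ L <;> simp [target, hu]
  refine ⟨_, {of (Fin.last _)}, 2, _, IsSimulation.of_word (μ := word)
    (decidableRelators_singleton_of _) (minimalPresentation_singleton_of _) (by norm_num)
    ?_ ?_ ?_ ?_ fun _ => wordProblemSolvable_singleton_of _⟩
  · exact fun u v h => spell_injective (liftWord_injective
      (conjWord_inj_left ((hreduced u).mk_injective (hreduced v) h)))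
  · exact primrec₂_conjWord.to_comp.comp (primrec_liftWord.comp primrec_spell).to_comp htarget
  · intro u
    simp [word, length_conjWord, liftWord, length_spell]
  · intro u
    rw [mk_conjWord, mul_assoc, Subgroup.normalClosure_normal.mem_comm_iff,
      inv_mul_cancel_right, of_mem_normalClosure_singleton_of_iff]
    by_cases hu : u ∈ L <;> simp [target, hu, Fin.castSucc_ne_last]

end Simulation

section Halting

open Nat.Partrec (Code)

theorem CEPred.exists_code {α : Type*} [Primcodable α] {p : α → Prop} (hp : CEPred p) :
    ∃ c : Code, ∀ a, p a ↔ ∃ k, (c.evaln k (Encodable.encode a)).isSome := by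
  obtain ⟨c, hc⟩ := Code.exists_code.1 hp
  refine ⟨c, fun a => ?_⟩
  have hdom : (c.eval (Encodable.encode a)).Dom ↔ p a := by
    simp [hc, Encodable.encodek, Part.assert]
  rw [← hdom, Part.dom_iff_mem]
  simp only [Code.evaln_complete, Option.isSome_iff_exists, Option.mem_def]
  exact ⟨fun ⟨x, k, hk⟩ => ⟨k, x, hk⟩, fun ⟨k, x, hk⟩ => ⟨x, k, hk⟩⟩

def FirstHaltsAt (c : Code) (n k : ℕ) : Prop :=
  (c.evaln k n).isSome ∧ ∀ j < k, (c.evaln j n).isSome = false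

theorem FirstHaltsAt.unique {c : Code} {n k k' : ℕ} (h : FirstHaltsAt c n k)
    (h' : FirstHaltsAt c n k') : k = k' := by
  by_contra hne
  rcases lt_or_gt_of_ne hne with hlt | hlt
  · exact absurd (h'.2 k hlt) (by simp [h.1])
  · exact absurd (h.2 k' hlt) (by simp [h'.1])

theorem exists_firstHaltsAt {c : Code} {n : ℕ} (h : ∃ k, (c.evaln k n).isSome) :
    ∃ k, FirstHaltsAt c n k :=
  ⟨Nat.find h, Nat.find_spec h, fun _ hj => by simpa using Nat.find_min h hj⟩

theorem primrecRel_firstHaltsAt (c : Code) : PrimrecRel (FirstHaltsAt c) := by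
  have hhalts : PrimrecRel fun k n => (c.evaln k n).isSome = true :=
    Primrec.eq.comp (Primrec.option_isSome.comp (Code.primrec_evaln.comp
      ((Primrec.fst.pair (Primrec.const c)).pair Primrec.snd))) (Primrec.const true)
  refine (PrimrecPred.and (hhalts.comp Primrec.snd Primrec.fst)
    ((PrimrecRel.forall_lt hhalts.not).comp Primrec.snd Primrec.fst)).of_eq fun _ => ?_
  simp [FirstHaltsAt]

end Halting

section WordsUpTo

variable {α : Type*}

def wordsUpTo (letters : List α) (n : ℕ) : List (List α) :=
  (fun W => [] :: W.flatMap fun w => letters.map (· :: w))^[n] [[]]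

theorem mem_wordsUpTo {letters : List α} {u : List α} (hu : ∀ a ∈ u, a ∈ letters) {n : ℕ}
    (hn : u.length ≤ n) : u ∈ wordsUpTo letters n := by
  induction n generalizing u with
  | zero => simp_all [wordsUpTo]
  | succ n ih =>
    rw [wordsUpTo, Function.iterate_succ_apply']
    rcases u with _ | ⟨a, w⟩
    · exact List.mem_cons_self
    · refine List.mem_cons_of_mem _ (List.mem_flatMap.2 ⟨w, ih ?_ ?_, List.mem_map.2 ⟨a, ?_, rfl⟩⟩)
      · exact fun b hb => hu b (List.mem_cons_of_mem _ hb)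
      · simpa using hn
      · exact hu a List.mem_cons_self

theorem primrec_wordsUpTo [Primcodable α] (letters : List α) : Primrec (wordsUpTo letters) :=
  Primrec.nat_iterate .id (Primrec.const _) <| Primrec.list_cons.comp (Primrec.const [])
    (Primrec.list_flatMap .snd (Primrec.list_map (Primrec.const letters)
      (Primrec.list_cons.comp .snd (Primrec.snd.comp .fst)).to₂).to₂)

end WordsUpTo

section Relators

open FreeGroup
open Nat.Partrec (Code)

variable {A : Type} [Fintype A]

noncomputable def relatorWord (u : List A) (k : ℕ) : List (Fin (Fintype.card A + 2) × Bool) :=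
  padCommLastWord k (markedWord u)

theorem length_relatorWord (u : List A) (k : ℕ) :
    (relatorWord u k).length = 2 * k + 4 * (u.length + 1) := by
  rw [← length_simulationWord]
  simp [relatorWord, padCommLastWord, simulationWord]
  ring

theorem isConj_mk_relatorWord (u : List A) (k : ℕ) :
    IsConj (mk (simulationWord u)) (mk (relatorWord u k)) :=
  isConj_iff.2 ⟨_, by rw [relatorWord, mk_padCommLastWord, simulationWord, mk_commLastWord]⟩

variable [Primcodable A]

def relators (c : Code) : Set (FreeGroup (Fin (Fintype.card A + 2))) :=
  {w | ∃ u k, FirstHaltsAt c (Encodable.encode u) k ∧ w = mk (relatorWord u k)}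

theorem mk_mem_relators_iff (c : Code) (l : List (Fin (Fintype.card A + 2) × Bool)) :
    mk l ∈ relators c ↔ ∃ k ≤ (reduce l).length,
      ∃ u ∈ wordsUpTo (Finset.univ : Finset A).toList (reduce l).length,
        FirstHaltsAt c (Encodable.encode u) k ∧ reduce l = relatorWord u k := by
  have hred : ∀ (u : List A) k, IsReduced (relatorWord u k) := fun u k =>
    (isReduced_markedWord u).padCommLastWord (markedWord_ne_nil u) k
  constructor
  · rintro ⟨u, k, hk, hl⟩
    rw [(hred u k).mk_eq_iff] at hl
    have hlen := length_relatorWord u k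
    rw [← hl] at hlen
    exact ⟨k, by omega, u, mem_wordsUpTo (fun a _ => by simp) (by omega), hk, hl⟩
  · rintro ⟨k, -, u, -, hk, hl⟩
    exact ⟨u, k, hk, (hred u k).mk_eq_iff.2 hl⟩

theorem decidableRelators_relators (c : Code) : DecidableRelators (relators (A := A) c) := by
  have hrel : PrimrecRel fun (u : List A) (p : List (Fin (Fintype.card A + 2) × Bool) × ℕ) =>
      FirstHaltsAt c (Encodable.encode u) p.2 ∧ reduce p.1 = relatorWord u p.2 :=
    PrimrecPred.and
      ((primrecRel_firstHaltsAt c).comp (Primrec.encode.comp .fst) (Primrec.snd.comp .snd))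
      (Primrec.eq.comp (primrec_reduce.comp (Primrec.fst.comp .snd))
        (primrec₂_padCommLastWord.comp (Primrec.snd.comp .snd)
          ((primrec₂_conjWord.comp primrec_spell (Primrec.const _)).comp .fst)))
  have hlen : Primrec fun l : List (Fin (Fintype.card A + 2) × Bool) => (reduce l).length :=
    Primrec.list_length.comp primrec_reduce
  have hinner : PrimrecRel fun (k : ℕ) (l : List (Fin (Fintype.card A + 2) × Bool)) =>
      ∃ u ∈ wordsUpTo (Finset.univ : Finset A).toList (reduce l).length,
        FirstHaltsAt c (Encodable.encode u) k ∧ reduce l = relatorWord u k :=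
    (PrimrecRel.exists_mem_list hrel).comp ((primrec_wordsUpTo _).comp (hlen.comp .snd))
      (Primrec.snd.pair .fst)
  have hsearch : PrimrecPred fun l : List (Fin (Fintype.card A + 2) × Bool) =>
      ∃ k ∈ List.range ((reduce l).length + 1),
        ∃ u ∈ wordsUpTo (Finset.univ : Finset A).toList (reduce l).length,
          FirstHaltsAt c (Encodable.encode u) k ∧ reduce l = relatorWord u k :=
    (PrimrecRel.exists_mem_list hinner).comp (Primrec.list_range.comp (Primrec.succ.comp hlen))
      .id
  refine hsearch.computablePred.of_eq fun l => ?_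
  simp only [List.mem_range, Nat.lt_succ_iff, mk_mem_relators_iff]

variable {L : Set (List A)} {c : Code}

theorem normalClosure_relators
    (hc : ∀ u, u ∈ L ↔ ∃ k, (c.evaln k (Encodable.encode u)).isSome) :
    Subgroup.normalClosure (relators (A := A) c) =
      Subgroup.normalClosure ((fun u => mk (simulationWord u)) '' L) := by
  refine le_antisymm (normalClosure_le_of_forall_isConj ?_) (normalClosure_le_of_forall_isConj ?_)
  · rintro _ ⟨u, k, hk, rfl⟩
    exact ⟨_, ⟨u, (hc u).2 ⟨k, hk.1⟩, rfl⟩, isConj_mk_relatorWord u k⟩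
  · rintro _ ⟨u, hu, rfl⟩
    obtain ⟨k, hk⟩ := exists_firstHaltsAt ((hc u).1 hu)
    exact ⟨_, ⟨u, k, hk, rfl⟩, (isConj_mk_relatorWord u k).symm⟩

theorem minimalPresentation_relators
    (hc : ∀ u, u ∈ L ↔ ∃ k, (c.evaln k (Encodable.encode u)).isSome) :
    MinimalPresentation (relators (A := A) c) := by
  refine minimalPresentation_of_forall_notMem ?_
  rintro _ ⟨u, k, hk, rfl⟩ hmem
  have hle : Subgroup.normalClosure (relators c \ {mk (relatorWord u k)}) ≤
      Subgroup.normalClosure ((fun v => mk (simulationWord v)) '' (L \ {u})) := by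
    refine normalClosure_le_of_forall_isConj ?_
    rintro _ ⟨⟨v, j, hj, rfl⟩, hne⟩
    have hvu : v ≠ u := by
      rintro rfl
      exact hne (by rw [hj.unique hk]; rfl)
    exact ⟨_, ⟨v, ⟨(hc v).2 ⟨j, hj.1⟩, hvu⟩, rfl⟩, isConj_mk_relatorWord v j⟩
  have hu := (mk_simulationWord_mem_normalClosure_iff (L \ {u}) u).1
    (((isConj_mk_relatorWord u k).mem_normal_iff (N := Subgroup.normalClosure _)).2 (hle hmem))
  exact hu.2 rfl

theorem exists_isSimulation_of_not_computablePred (hL : CEPred fun u => u ∈ L)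
    (hdec : ¬ComputablePred fun u => u ∈ L) :
    ∃ (m : ℕ) (R : Set (FreeGroup (Fin m))) (C : ℕ) (μ : List A → FreeGroup (Fin m)),
      IsSimulation L R C μ := by
  obtain ⟨c, hc⟩ := hL.exists_code
  have htriv (u : List A) :
      mk (simulationWord u) ∈ Subgroup.normalClosure (relators c) ↔ u ∈ L := by
    rw [normalClosure_relators hc]
    exact mk_simulationWord_mem_normalClosure_iff L u
  have hinj : Function.Injective fun u : List A => mk (simulationWord u) := fun u v huv =>
    (mk_simulationWord_mem_normalClosure_iff {v} u).1
      (Subgroup.subset_normalClosure ⟨v, rfl, huv.symm⟩)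
  exact ⟨_, relators c, 4, _, IsSimulation.of_word (decidableRelators_relators c)
    (minimalPresentation_relators hc) (by norm_num) hinj primrec_simulationWord.to_comp
    (fun u => (length_simulationWord u).le) htriv fun h => absurd h hdec⟩

end Relators

/-- for every c.e. language `L ⊆ A*` over a finite alphabet `A` there is a
finitely generated decidable minimal presentation `P = ⟨X ∥ R⟩`, a constant `C ≥ 1` and
a computable injective map `μ : A* → F(X)` with `|μ(u)| ≤ C·(|u|+1)`, such that `μ(u)` is
trivial in `P` iff `u ∈ L`, and the word problem for `P` is solvable iff `L` is
decidable. -/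
theorem simulation_exists :
    ∀ (A : Type) [Fintype A] [Primcodable A] (L : Set (List A)),
      CEPred (fun u : List A => u ∈ L) →
      ∃ (m : ℕ) (R : Set (FreeGroup (Fin m))) (C : ℕ) (μ : List A → FreeGroup (Fin m)),
        DecidableRelators R ∧ MinimalPresentation R ∧
        1 ≤ C ∧
        Function.Injective μ ∧
        (∃ μ' : List A → List (Fin m × Bool),
          Computable μ' ∧ ∀ u, FreeGroup.mk (μ' u) = μ u) ∧
        (∀ u, wordLength (μ u) ≤ C * (u.length + 1)) ∧
        (∀ u, μ u ∈ Subgroup.normalClosure R ↔ u ∈ L) ∧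
        (WordProblemSolvable R ↔ ComputablePred fun u : List A => u ∈ L) := by
  intro A _ _ L hL
  by_cases hdec : ComputablePred fun u : List A => u ∈ L
  · exact exists_isSimulation_of_computablePred hdec
  · exact exists_isSimulation_of_not_computablePred hL hdec
end

section
/- Fix any subset K ⊆ ℕ and let f_K : ℕ → ℕ be the piecewise-defined function associated to K. Then f_K is superadditive: f_K(m) + f_K(n) ≤ f_K(m + n) for all m, n ∈ ℕ. -/
/-- The index `n ≥ 1` of the interval `I_n = (10^{(n-1)²}, 10^{n²}]` containing `x`
(for `x ≥ 2`): the least `n ≥ 1` with `x ≤ 10 ^ (n ^ 2)`.  For `x ∈ I_n` this equals `n`. -/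
noncomputable def intervalIdx (x : ℕ) : ℕ :=
  sInf {n : ℕ | 1 ≤ n ∧ x ≤ 10 ^ (n ^ 2)}

/-- The function `f_K` associated to a set `K ⊆ ℕ`: `f_K(0) = f_K(1) = 0`, and for
`x ∈ I_n`, `f_K(x) = 10^{n³}·x²` if `n ∈ K` and `f_K(x) = 10^{n³+2n²}·x²` if `n ∉ K`. -/
noncomputable def fK (K : Set ℕ) (x : ℕ) : ℕ :=
  letI := Classical.dec (intervalIdx x ∈ K)
  if x ≤ 1 then 0
  else if intervalIdx x ∈ K then 10 ^ (intervalIdx x) ^ 3 * x ^ 2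
  else 10 ^ ((intervalIdx x) ^ 3 + 2 * (intervalIdx x) ^ 2) * x ^ 2

/-!
Write `f_K(x) = c_K(n) x²` for `x ∈ I_n`, with `c_K(n) ∈ {10^{n³}, 10^{n³+2n²}}`. Since
`n³ + 2n² ≤ (n+1)³`, the coefficient `c_K` is monotone in `n` whatever `K` is, and `n` is monotone
in `x`; a monotone coefficient times `x²` is superadditive because `m² + n² ≤ (m+n)²`.
-/

theorem mul_pow_add_mul_pow_le {c : ℕ → ℕ} (hc : Monotone c) {k : ℕ} (hk : k ≠ 0) (m n : ℕ) :
    c m * m ^ k + c n * n ^ k ≤ c (m + n) * (m + n) ^ k :=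
  calc c m * m ^ k + c n * n ^ k ≤ c (m + n) * m ^ k + c (m + n) * n ^ k := by
        gcongr <;> apply hc <;> omega
    _ = c (m + n) * (m ^ k + n ^ k) := by ring
    _ ≤ c (m + n) * (m + n) ^ k := by gcongr; exact pow_add_pow_le (by omega) (by omega) hk

theorem intervalIdx_set_nonempty (x : ℕ) : {n : ℕ | 1 ≤ n ∧ x ≤ 10 ^ (n ^ 2)}.Nonempty := by
  refine ⟨x + 1, by omega, ?_⟩
  calc x ≤ 10 ^ x := (Nat.lt_pow_self (by norm_num)).le
    _ ≤ 10 ^ ((x + 1) ^ 2) := Nat.pow_le_pow_right (by norm_num) (by nlinarith)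

theorem intervalIdx_mono : Monotone intervalIdx := fun _ y hxy =>
  csInf_le_csInf (OrderBot.bddBelow _) (intervalIdx_set_nonempty y)
    fun _ hn => ⟨hn.1, hxy.trans hn.2⟩

noncomputable def fKCoeff (K : Set ℕ) (n : ℕ) : ℕ :=
  letI := Classical.dec (n ∈ K)
  if n ∈ K then 10 ^ n ^ 3 else 10 ^ (n ^ 3 + 2 * n ^ 2)

theorem pow_cube_le_fKCoeff (K : Set ℕ) (n : ℕ) : 10 ^ n ^ 3 ≤ fKCoeff K n := by
  unfold fKCoeff
  split_ifs
  · exact le_rfl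
  · exact Nat.pow_le_pow_right (by norm_num) (by omega)

theorem fKCoeff_le (K : Set ℕ) (n : ℕ) : fKCoeff K n ≤ 10 ^ (n ^ 3 + 2 * n ^ 2) := by
  unfold fKCoeff
  split_ifs
  · exact Nat.pow_le_pow_right (by norm_num) (by omega)
  · exact le_rfl

theorem fKCoeff_mono (K : Set ℕ) : Monotone (fKCoeff K) :=
  monotone_nat_of_le_succ fun n =>
    calc fKCoeff K n ≤ 10 ^ (n ^ 3 + 2 * n ^ 2) := fKCoeff_le K n
      _ ≤ 10 ^ (n + 1) ^ 3 := Nat.pow_le_pow_right (by norm_num) <|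
          calc n ^ 3 + 2 * n ^ 2 ≤ n ^ 3 + 2 * n ^ 2 + (n ^ 2 + 3 * n + 1) := Nat.le_add_right _ _
            _ = (n + 1) ^ 3 := by ring
      _ ≤ fKCoeff K (n + 1) := pow_cube_le_fKCoeff K (n + 1)

theorem fK_of_le_one (K : Set ℕ) {x : ℕ} (hx : x ≤ 1) : fK K x = 0 := if_pos hx

theorem fK_of_two_le (K : Set ℕ) {x : ℕ} (hx : 2 ≤ x) :
    fK K x = fKCoeff K (intervalIdx x) * x ^ 2 := by
  unfold fK fKCoeff
  rw [if_neg (by omega)]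
  split_ifs <;> rfl

theorem fK_le (K : Set ℕ) (x : ℕ) : fK K x ≤ fKCoeff K (intervalIdx x) * x ^ 2 := by
  rcases Nat.lt_or_ge x 2 with hx | hx
  · rw [fK_of_le_one K (by omega)]
    exact Nat.zero_le _
  · rw [fK_of_two_le K hx]

/-- for any `K ⊆ ℕ`, the function `f_K` is superadditive. -/
theorem fK_superadditive (K : Set ℕ) :
    ∀ m n : ℕ, fK K m + fK K n ≤ fK K (m + n) := by
  intro m n
  rcases Nat.lt_or_ge (m + n) 2 with hmn | hmn
  · simp [fK_of_le_one K (show m ≤ 1 by omega), fK_of_le_one K (show n ≤ 1 by omega)]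
  · rw [fK_of_two_le K hmn]
    calc fK K m + fK K n
        ≤ fKCoeff K (intervalIdx m) * m ^ 2 + fKCoeff K (intervalIdx n) * n ^ 2 :=
          add_le_add (fK_le K m) (fK_le K n)
      _ ≤ fKCoeff K (intervalIdx (m + n)) * (m + n) ^ 2 :=
          mul_pow_add_mul_pow_le ((fKCoeff_mono K).comp intervalIdx_mono) two_ne_zero m n
end

section
/- Let K ⊆ ℕ be computably enumerable but not decidable, and let f_K : ℕ → ℕ be the piecewise-defined function associated to K. Then the fourth power f_K⁴ (that is, x ↦ f_K(x)⁴) is not equivalent to any computable function; i.e., there is no computable g : ℕ → ℕ with f_K⁴ ≈ g. -/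
/-- `u ≼ v`: `u(n) ≤ d·v(d·n) + d·n` for some constant `d ≥ 1`. -/
def DominatedBy (u v : ℕ → ℕ) : Prop :=
  ∃ d : ℕ, 1 ≤ d ∧ ∀ n, u n ≤ d * v (d * n) + d * n

/-- `u ≈ v`: equivalence of complexity functions. -/
def FuncEquiv (u v : ℕ → ℕ) : Prop :=
  DominatedBy u v ∧ DominatedBy v u

theorem ComputablePred.of_eventually_iff {p q : ℕ → Prop} (hq : ComputablePred q)
    (h : ∀ᶠ n in Filter.atTop, p n ↔ q n) : ComputablePred p := by
  classical
  obtain ⟨N, hN⟩ := Filter.eventually_atTop.1 h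
  obtain ⟨f, hf, rfl⟩ := ComputablePred.computable_iff.1 hq
  set L := (List.range N).filter fun n => decide (p n)
  have hL : PrimrecPred (· ∈ L) :=
    (Primrec.eq.exists_mem_list.comp (.const L) .id).of_eq (by simp)
  refine ComputablePred.computable_iff.2
    ⟨fun n => bif decide (n < N) then decide (n ∈ L) else f n,
      (Primrec.nat_lt.decide.comp .id (.const N)).to_comp.cond hL.decide.to_comp hf, ?_⟩
  funext n
  by_cases hn : n < N
  · simp [L, hn]
  · simp [hn, hN n (by omega)]

theorem Primrec.nat_pow : Primrec₂ ((· ^ ·) : ℕ → ℕ → ℕ) :=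
  Primrec₂.unpaired'.1 Nat.Primrec.pow

theorem intervalIdx_eq {n x : ℕ} (hn : 1 ≤ n) (hlo : 10 ^ ((n - 1) ^ 2) < x)
    (hhi : x ≤ 10 ^ (n ^ 2)) : intervalIdx x = n := by
  refine le_antisymm (Nat.sInf_le ⟨hn, hhi⟩) (le_csInf ⟨n, hn, hhi⟩ ?_)
  rintro m ⟨-, hm⟩
  by_contra! hmn
  have : 10 ^ (m ^ 2) ≤ 10 ^ ((n - 1) ^ 2) :=
    Nat.pow_le_pow_right (by norm_num) (Nat.pow_le_pow_left (by omega) 2)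
  omega

theorem fK_of_mem {K : Set ℕ} {n x : ℕ} (hn : 1 ≤ n) (hlo : 10 ^ ((n - 1) ^ 2) < x)
    (hhi : x ≤ 10 ^ (n ^ 2)) (hK : n ∈ K) : fK K x = 10 ^ n ^ 3 * x ^ 2 := by
  have hx : ¬ x ≤ 1 := by have := Nat.one_le_pow ((n - 1) ^ 2) 10 (by norm_num); omega
  rw [fK, intervalIdx_eq hn hlo hhi, if_neg hx, if_pos hK]

theorem fK_of_not_mem {K : Set ℕ} {n x : ℕ} (hn : 1 ≤ n) (hlo : 10 ^ ((n - 1) ^ 2) < x)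
    (hhi : x ≤ 10 ^ (n ^ 2)) (hK : n ∉ K) : fK K x = 10 ^ (n ^ 3 + 2 * n ^ 2) * x ^ 2 := by
  have hx : ¬ x ≤ 1 := by have := Nat.one_le_pow ((n - 1) ^ 2) 10 (by norm_num); omega
  rw [fK, intervalIdx_eq hn hlo hhi, if_neg hx, if_neg hK]

/-- A point near the left end of `I_n`: its multiples by `c ≤ 10^{2(n-1)}` stay in `I_n`. -/
def samplePt (n : ℕ) : ℕ := 10 ^ ((n - 1) ^ 2 + 1)

def baseVal (n : ℕ) : ℕ := 10 ^ n ^ 3 * samplePt n ^ 2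

theorem mul_samplePt_mem_interval {n c : ℕ} (hn : 1 ≤ n) (hc : 1 ≤ c)
    (hcn : c ≤ 10 ^ (2 * (n - 1))) :
    10 ^ ((n - 1) ^ 2) < c * samplePt n ∧ c * samplePt n ≤ 10 ^ (n ^ 2) := by
  constructor
  · calc 10 ^ ((n - 1) ^ 2) < samplePt n := Nat.pow_lt_pow_right (by norm_num) (by omega)
      _ ≤ c * samplePt n := Nat.le_mul_of_pos_left _ hc
  · have hexp : 2 * (n - 1) + ((n - 1) ^ 2 + 1) ≤ n ^ 2 := by
      obtain ⟨m, rfl⟩ : ∃ m, n = m + 1 := ⟨n - 1, by omega⟩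
      simp only [Nat.add_sub_cancel]; nlinarith
    calc c * samplePt n ≤ 10 ^ (2 * (n - 1)) * samplePt n := Nat.mul_le_mul_right _ hcn
      _ = 10 ^ (2 * (n - 1) + ((n - 1) ^ 2 + 1)) := by rw [samplePt, ← pow_add]
      _ ≤ 10 ^ (n ^ 2) := Nat.pow_le_pow_right (by norm_num) hexp

theorem fK_mul_samplePt_of_mem {K : Set ℕ} {n c : ℕ} (hn : 1 ≤ n) (hc : 1 ≤ c)
    (hcn : c ≤ 10 ^ (2 * (n - 1))) (hK : n ∈ K) :
    fK K (c * samplePt n) = c ^ 2 * baseVal n := by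
  obtain ⟨hlo, hhi⟩ := mul_samplePt_mem_interval hn hc hcn
  rw [fK_of_mem hn hlo hhi hK, baseVal]
  ring

theorem fK_samplePt_of_not_mem {K : Set ℕ} {n : ℕ} (hn : 1 ≤ n) (hK : n ∉ K) :
    fK K (samplePt n) = 10 ^ (2 * n ^ 2) * baseVal n := by
  obtain ⟨hlo, hhi⟩ := mul_samplePt_mem_interval hn le_rfl (Nat.one_le_pow _ _ (by norm_num))
  rw [one_mul] at hlo hhi
  rw [fK_of_not_mem hn hlo hhi hK, baseVal, pow_add]
  ring

theorem samplePt_le_baseVal_pow_four (n : ℕ) : samplePt n ≤ baseVal n ^ 4 := by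
  calc samplePt n ≤ samplePt n ^ 8 := Nat.le_self_pow (by norm_num) _
    _ ≤ (10 ^ n ^ 3) ^ 4 * samplePt n ^ 8 := Nat.le_mul_of_pos_left _ (by positivity)
    _ = baseVal n ^ 4 := by rw [baseVal]; ring

theorem three_mul_pow_ten_lt {c n : ℕ} (hcn : c < n) : 3 * c ^ 10 < 10 ^ (8 * n ^ 2) := by
  have hexp : 10 * c + 1 ≤ 8 * n ^ 2 := by nlinarith
  calc 3 * c ^ 10 < 10 * (10 ^ c) ^ 10 := by
        have := Nat.pow_lt_pow_left (Nat.lt_pow_self (n := c) (by norm_num : 1 < 10))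
          (by norm_num : (10 : ℕ) ≠ 0)
        omega
    _ = 10 ^ (10 * c + 1) := by ring
    _ ≤ 10 ^ (8 * n ^ 2) := Nat.pow_le_pow_right (by norm_num) hexp

section Equivalence

variable {K : Set ℕ} {g : ℕ → ℕ} {d₁ d₂ : ℕ}

theorem le_of_mem_of_dominatedBy (hd₁ : 1 ≤ d₁) (hd₂ : 1 ≤ d₂)
    (H₂ : ∀ x, g x ≤ d₂ * fK K (d₂ * x) ^ 4 + d₂ * x) {n : ℕ} (hn : d₁ * d₂ < n) (hK : n ∈ K) :
    g (d₁ * samplePt n) ≤ 2 * (d₁ * d₂) ^ 9 * baseVal n ^ 4 := by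
  set c := d₁ * d₂
  have hc : 1 ≤ c := Nat.one_le_iff_ne_zero.2 (by positivity)
  have hcn : c ≤ 10 ^ (2 * (n - 1)) :=
    calc c ≤ n - 1 := by omega
      _ ≤ 10 ^ (n - 1) := (Nat.lt_pow_self (by norm_num)).le
      _ ≤ 10 ^ (2 * (n - 1)) := Nat.pow_le_pow_right (by norm_num) (by omega)
  have hval : fK K (d₂ * (d₁ * samplePt n)) = c ^ 2 * baseVal n := by
    rw [← mul_assoc, mul_comm d₂, fK_mul_samplePt_of_mem (by omega) hc hcn hK]
  calc g (d₁ * samplePt n) ≤ d₂ * fK K (d₂ * (d₁ * samplePt n)) ^ 4 + d₂ * (d₁ * samplePt n) :=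
        H₂ _
    _ = d₂ * c ^ 8 * baseVal n ^ 4 + c * samplePt n := by rw [hval]; ring
    _ ≤ c * c ^ 8 * baseVal n ^ 4 + c ^ 9 * baseVal n ^ 4 := by
        gcongr
        · exact Nat.le_mul_of_pos_left _ hd₁
        · exact Nat.le_self_pow (by norm_num) _
        · exact samplePt_le_baseVal_pow_four n
    _ = 2 * c ^ 9 * baseVal n ^ 4 := by ring

theorem pow_ten_le_of_not_mem_of_dominatedBy (hd₂ : 1 ≤ d₂)
    (H₁ : ∀ x, fK K x ^ 4 ≤ d₁ * g (d₁ * x) + d₁ * x) {n : ℕ} (hn : 1 ≤ n) (hK : n ∉ K)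
    (hg : g (d₁ * samplePt n) ≤ 2 * (d₁ * d₂) ^ 9 * baseVal n ^ 4) :
    10 ^ (8 * n ^ 2) ≤ 3 * (d₁ * d₂) ^ 10 := by
  set c := d₁ * d₂
  have hd₁c : d₁ ≤ c := Nat.le_mul_of_pos_right _ hd₂
  have hb : 0 < baseVal n ^ 4 := by unfold baseVal samplePt; positivity
  refine Nat.le_of_mul_le_mul_right ?_ hb
  calc 10 ^ (8 * n ^ 2) * baseVal n ^ 4 = fK K (samplePt n) ^ 4 := by
        rw [fK_samplePt_of_not_mem hn hK]; ring
    _ ≤ d₁ * g (d₁ * samplePt n) + d₁ * samplePt n := H₁ _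
    _ ≤ c * (2 * c ^ 9 * baseVal n ^ 4) + c ^ 10 * baseVal n ^ 4 := by
        gcongr
        · exact hd₁c.trans (Nat.le_self_pow (by norm_num) c)
        · exact samplePt_le_baseVal_pow_four n
    _ = 3 * c ^ 10 * baseVal n ^ 4 := by ring

theorem mem_iff_le_of_dominatedBy (hd₁ : 1 ≤ d₁) (hd₂ : 1 ≤ d₂)
    (H₁ : ∀ x, fK K x ^ 4 ≤ d₁ * g (d₁ * x) + d₁ * x)
    (H₂ : ∀ x, g x ≤ d₂ * fK K (d₂ * x) ^ 4 + d₂ * x) {n : ℕ} (hn : d₁ * d₂ < n) :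
    n ∈ K ↔ g (d₁ * samplePt n) ≤ 2 * (d₁ * d₂) ^ 9 * baseVal n ^ 4 := by
  refine ⟨le_of_mem_of_dominatedBy hd₁ hd₂ H₂ hn, fun hg => ?_⟩
  by_contra hK
  exact (three_mul_pow_ten_lt hn).not_ge
    (pow_ten_le_of_not_mem_of_dominatedBy hd₂ H₁ (by omega) hK hg)

end Equivalence

theorem primrec_samplePt : Primrec samplePt :=
  Primrec.nat_pow.comp (.const 10) <| Primrec.nat_add.comp
    (Primrec.nat_pow.comp (Primrec.nat_sub.comp .id (.const 1)) (.const 2)) (.const 1)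

theorem primrec_baseVal : Primrec baseVal :=
  Primrec.nat_mul.comp (Primrec.nat_pow.comp (.const 10) (Primrec.nat_pow.comp .id (.const 3)))
    (Primrec.nat_pow.comp primrec_samplePt (.const 2))

theorem fK_pow_four_not_equiv_computable_general (K : Set ℕ)
    (hK : ¬ ComputablePred fun n => n ∈ K) :
    ¬ ∃ g : ℕ → ℕ, Computable g ∧ FuncEquiv (fun x => fK K x ^ 4) g := by
  rintro ⟨g, hg, ⟨d₁, hd₁, H₁⟩, ⟨d₂, hd₂, H₂⟩⟩
  have htest : ComputablePred fun n => g (d₁ * samplePt n) ≤ 2 * (d₁ * d₂) ^ 9 * baseVal n ^ 4 :=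
    (Primrec.nat_le.decide.to_comp.comp
      (hg.comp (Primrec.nat_mul.comp (.const d₁) primrec_samplePt).to_comp)
      (Primrec.nat_mul.comp (.const _)
        (Primrec.nat_pow.comp primrec_baseVal (.const 4))).to_comp).computablePred
  refine hK (htest.of_eventually_iff ?_)
  filter_upwards [Filter.eventually_gt_atTop (d₁ * d₂)] with n hn
  exact mem_iff_le_of_dominatedBy hd₁ hd₂ H₁ H₂ hn

/-- if `K ⊆ ℕ` is c.e. but not decidable, then `f_K⁴` is not equivalent to
any computable function. -/
theorem fK_pow_four_not_equiv_computable (K : Set ℕ)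
    (hce : CEPred fun n => n ∈ K) (hK : ¬ ComputablePred fun n => n ∈ K) :
    ¬ ∃ g : ℕ → ℕ, Computable g ∧ FuncEquiv (fun x => fK K x ^ 4) g :=
  fK_pow_four_not_equiv_computable_general K hK
end

section
/- Let A and Q be sets and let F = F(A ⊔ Q) be the free group on their disjoint union. Let J be an index set and for each j ∈ J let u_j = c_{j,0} · q_{j,1} · c_{j,1} · q_{j,2} · c_{j,2} ⋯ q_{j,k_j} · c_{j,k_j}, where k_j ≥ 1, each c_{j,i} lies in the subgroup of F generated by the generators coming from A, each q_{j,i} is a generator coming from Q (occurring with exponent +1), and the letters q_{j,i} are pairwise distinct, both within each u_j and across distinct indices j. Then the family consisting of all generators a (for a ∈ A) together with all elements u_j (for j ∈ J) freely generates the subgroup of F that it generates; equivalently, the group homomorphism F(A ⊔ J) → F sending the generator a to a and the generator j to u_j is injective. -/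
/-!
Build a retraction `ψ : F(A ⊔ Q) → F(A ⊔ J)` with `ψ(a) = a` and `ψ(u_j) = j`; it is a left
inverse of `a ↦ a, j ↦ u_j`. Writing `d_i` for `c_{j,i}` viewed in `F(A ⊔ J)`, send
`q_{j,1} ↦ d_0⁻¹ · j · d_k⁻¹`, `q_{j,i} ↦ d_{i-1}⁻¹` for `1 < i`, and every other `Q`-letter
to `1`; this is well defined because the letters `q_{j,i}` are distinct. Then
`ψ(u_j) = d_0 (d_0⁻¹ j d_k⁻¹ d_1)(d_1⁻¹ d_2) ⋯ (d_{k-1}⁻¹ d_k)` telescopes to `j`, which needs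
`k ≥ 1`.
-/

theorem List.mul_prod_ofFn_inv_mul_mul_telescope {G : Type*} [Group G] :
    ∀ (n : ℕ) (d : Fin (n + 1) → G) (y : Fin n → G),
      d 0 * (List.ofFn fun i : Fin n => (d i.castSucc)⁻¹ * y i * d i.succ).prod
        = (List.ofFn y).prod * d (Fin.last n)
  | 0, d, y => by simp
  | n + 1, d, y => by
      have ih := List.mul_prod_ofFn_inv_mul_mul_telescope n (fun i => d i.succ) (fun i => y i.succ)
      simp only [List.ofFn_succ, List.prod_cons, Fin.succ_castSucc, Fin.succ_last,
        Fin.castSucc_zero, Fin.succ_zero_eq_one] at ih ⊢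
      rw [← mul_assoc, ← mul_assoc, mul_inv_cancel_left, mul_assoc, mul_assoc, ← ih]

theorem List.prod_ofFn_ite_val_eq_zero {M : Type*} [Monoid M] {n : ℕ} (hn : 1 ≤ n) (g : M) :
    (List.ofFn fun i : Fin n => if (i : ℕ) = 0 then g else 1).prod = g := by
  obtain ⟨m, rfl⟩ : ∃ m, n = m + 1 := ⟨n - 1, by omega⟩
  simp [List.ofFn_succ]

namespace FreeGroup

open Sum

variable {A Q J : Type*} {k : J → ℕ} (c : (j : J) → Fin (k j + 1) → FreeGroup A)
  (q : (j : J) → Fin (k j) → Q)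

/-- The word `u_j = c_{j,0} q_{j,1} c_{j,1} ⋯ q_{j,k} c_{j,k}`; the letter `q_{j,i+1}` is `q j i`. -/
def alternatingWord (j : J) : FreeGroup (A ⊕ Q) :=
  map inl (c j 0) * (List.ofFn fun i : Fin (k j) => of (inr (q j i)) * map inl (c j i.succ)).prod

def alternatingWordHom : FreeGroup (A ⊕ J) →* FreeGroup (A ⊕ Q) :=
  lift (Sum.elim (fun a => of (inl a)) (alternatingWord c q))

def retractionLetter (p : Σ j, Fin (k j)) : FreeGroup (A ⊕ J) :=
  (map inl (c p.1 p.2.castSucc))⁻¹ *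
    if (p.2 : ℕ) = 0 then of (inr p.1) * (map inl (c p.1 (Fin.last _)))⁻¹ else 1

noncomputable def alternatingWordRetraction : FreeGroup (A ⊕ Q) →* FreeGroup (A ⊕ J) :=
  lift (Sum.elim (fun a => of (inl a))
    (Function.extend (fun p : Σ j, Fin (k j) => q p.1 p.2) (retractionLetter c) 1))

theorem alternatingWordRetraction_map_inl (w : FreeGroup A) :
    alternatingWordRetraction c q (map inl w) = map inl w := by
  suffices (alternatingWordRetraction c q).comp (map inl) = map inl from DFunLike.congr_fun this w
  ext a
  simp [alternatingWordRetraction]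

theorem alternatingWordRetraction_of_inr
    (hq : Function.Injective fun p : Σ j, Fin (k j) => q p.1 p.2) (j : J) (i : Fin (k j)) :
    alternatingWordRetraction c q (of (inr (q j i))) = retractionLetter c ⟨j, i⟩ := by
  simpa [alternatingWordRetraction] using hq.extend_apply (retractionLetter c) 1 ⟨j, i⟩

theorem alternatingWordRetraction_alternatingWord (hk : ∀ j, 1 ≤ k j)
    (hq : Function.Injective fun p : Σ j, Fin (k j) => q p.1 p.2) (j : J) :
    alternatingWordRetraction c q (alternatingWord c q j) = of (inr j) := by
  set d : Fin (k j + 1) → FreeGroup (A ⊕ J) := fun i => map inl (c j i)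
  have hletter (i : Fin (k j)) :
      alternatingWordRetraction c q (of (inr (q j i)) * map inl (c j i.succ)) =
        (d i.castSucc)⁻¹ * (if (i : ℕ) = 0 then of (inr j) * (d (Fin.last _))⁻¹ else 1) *
          d i.succ := by
    rw [_root_.map_mul, alternatingWordRetraction_of_inr c q hq, alternatingWordRetraction_map_inl]
    rfl
  rw [alternatingWord, _root_.map_mul, map_list_prod, List.map_ofFn,
    alternatingWordRetraction_map_inl]
  change d 0 * _ = _
  simp only [Function.comp_def, hletter]
  rw [List.mul_prod_ofFn_inv_mul_mul_telescope, List.prod_ofFn_ite_val_eq_zero (hk j),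
    inv_mul_cancel_right]

theorem alternatingWordRetraction_comp_alternatingWordHom (hk : ∀ j, 1 ≤ k j)
    (hq : Function.Injective fun p : Σ j, Fin (k j) => q p.1 p.2) :
    (alternatingWordRetraction c q).comp (alternatingWordHom c q) = MonoidHom.id _ := by
  ext (a | j)
  · simp [alternatingWordHom, alternatingWordRetraction]
  · simpa [alternatingWordHom] using alternatingWordRetraction_alternatingWord c q hk hq j

theorem alternatingWordHom_injective (hk : ∀ j, 1 ≤ k j)
    (hq : Function.Injective fun p : Σ j, Fin (k j) => q p.1 p.2) :
    Function.Injective (alternatingWordHom c q) :=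
  Function.LeftInverse.injective
    (DFunLike.congr_fun (alternatingWordRetraction_comp_alternatingWordHom c q hk hq))

end FreeGroup

/-- let `F = F(A ⊔ Q)` and let `u_j = c_{j,0}·q_{j,1}·c_{j,1}⋯q_{j,k_j}·c_{j,k_j}`
for `j ∈ J`, where each `c_{j,i}` lies in the subgroup generated by the `A`-generators,
each `q_{j,i}` is a `Q`-generator with exponent `+1`, `k_j ≥ 1`, and the letters `q_{j,i}`
are pairwise distinct (within each `u_j` and across distinct `j`).  Then the generators
`a` (for `a ∈ A`) together with the elements `u_j` freely generate the subgroup they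
generate: the homomorphism `F(A ⊔ J) → F(A ⊔ Q)` sending `a ↦ a` and `j ↦ u_j` is
injective. -/
theorem freely_generates_of_distinct_q_letters
    (A Q J : Type) (k : J → ℕ) (hk : ∀ j, 1 ≤ k j)
    (c : (j : J) → Fin (k j + 1) → FreeGroup A)
    (q : (j : J) → Fin (k j) → Q)
    (hq : Function.Injective fun p : Σ j : J, Fin (k j) => q p.1 p.2) :
    Function.Injective
      (FreeGroup.lift
        (Sum.elim (fun a : A => FreeGroup.of (Sum.inl a : A ⊕ Q))
          (fun j : J =>
            (FreeGroup.map (Sum.inl : A → A ⊕ Q)) (c j 0) *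
              (List.ofFn fun i : Fin (k j) =>
                FreeGroup.of (Sum.inr (q j i) : A ⊕ Q) *
                  (FreeGroup.map (Sum.inl : A → A ⊕ Q)) (c j i.succ)).prod)) :
        FreeGroup (A ⊕ J) →* FreeGroup (A ⊕ Q)) :=
  FreeGroup.alternatingWordHom_injective c q hk hq
end

section
/- Let X and Y be sets, let φ : F(X) → F(Y) be a group homomorphism, and let R ⊆ F(X) be a set of relators on which φ is injective. Suppose that for every subset S ⊆ R the induced homomorphism from the group presented by ⟨X ∥ S⟩ to the group presented by ⟨Y ∥ φ(S)⟩ (well-defined since φ maps ⟨⟨S⟩⟩ into ⟨⟨φ(S)⟩⟩) is injective. If the presentation ⟨X ∥ R⟩ is minimal, then the presentation ⟨Y ∥ φ(R)⟩ is minimal. -/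
/-- A homomorphism of free groups maps the normal closure of `S` into the normal closure
of `φ '' S`; hence it induces a homomorphism of the presented groups. -/
theorem normalClosure_le_comap_normalClosure_image {X Y : Type*}
    (φ : FreeGroup X →* FreeGroup Y) (S : Set (FreeGroup X)) :
    Subgroup.normalClosure S ≤ (Subgroup.normalClosure (φ '' S)).comap φ := by
  haveI : ((Subgroup.normalClosure (φ '' S)).comap φ).Normal :=
    Subgroup.Normal.comap inferInstance φ
  exact Subgroup.normalClosure_le_normal fun x hx =>
    Subgroup.subset_normalClosure (Set.mem_image_of_mem φ hx)

/-- let `φ : F(X) → F(Y)` be injective on a relator set `R ⊆ F(X)`, and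
suppose that for every `S ⊆ R` the induced homomorphism
`⟨X ∥ S⟩ → ⟨Y ∥ φ(S)⟩` is injective.  If `⟨X ∥ R⟩` is minimal, then `⟨Y ∥ φ(R)⟩` is
minimal. -/
theorem minimal_of_induced_injective (X Y : Type)
    (φ : FreeGroup X →* FreeGroup Y) (R : Set (FreeGroup X))
    (hφR : Set.InjOn φ R)
    (hinj : ∀ S ⊆ R, Function.Injective
      (QuotientGroup.map (Subgroup.normalClosure S) (Subgroup.normalClosure (φ '' S)) φ
        (normalClosure_le_comap_normalClosure_image φ S)))
    (hmin : ∀ R' ⊆ R, Subgroup.normalClosure R' = Subgroup.normalClosure R → R' = R) :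
    ∀ T ⊆ φ '' R, Subgroup.normalClosure T = Subgroup.normalClosure (φ '' R) →
      T = φ '' R := by
  intro T hTR hT
  set S : Set (FreeGroup X) := R ∩ φ ⁻¹' T with hS
  have hSR : S ⊆ R := Set.inter_subset_left
  have hφS : φ '' S = T := by
    apply Set.Subset.antisymm
    · rintro t ⟨s, hs, rfl⟩
      exact hs.2
    · intro t ht
      obtain ⟨r, hr, rfl⟩ := hTR ht
      exact ⟨r, ⟨hr, ht⟩, rfl⟩
  have hclS : Subgroup.normalClosure S = Subgroup.normalClosure R := by
    apply le_antisymm (Subgroup.normalClosure_mono hSR)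
    apply Subgroup.normalClosure_le_normal
    intro r hr
    -- φ r ∈ ncl (φ '' S) since ncl (φ '' S) = ncl T = ncl (φ '' R)
    have hφr : φ r ∈ Subgroup.normalClosure (φ '' S) := by
      rw [hφS, hT]
      exact Subgroup.subset_normalClosure (Set.mem_image_of_mem φ hr)
    have := hinj S hSR (a₁ := (r : FreeGroup X ⧸ Subgroup.normalClosure S)) (a₂ := 1)
      (by
        simp only [QuotientGroup.map_mk, map_one]
        exact (QuotientGroup.eq_one_iff _).2 hφr)
    exact (QuotientGroup.eq_one_iff r).1 this
  have hSeqR : S = R := hmin S hSR hclS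
  rw [← hφS, hSeqR]
end
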